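/- arXiv:1405.6440 — 6 statements merged into one kernel-verified Lean document; each statement's English description precedes it below -/
import Mathlib

section
/- Let a > 0, b > 0 be real numbers, set c = (1 + e^{a b})/e^{a b} and d = 1/(1 + e^{a b}), and define U(P) = c·(1/(1 + e^{-a(P-b)}) − d). Then for every P > 0 the second derivative of P ↦ log U(P) exists and equals −a²·d·e^{-a(P-b)} / ( c·(1 − d·(1 + e^{-a(P-b)}))² ) − a²·e^{-a(P-b)}/(1 + e^{-a(P-b)})², and this quantity is strictly negative. -/
/-!
Write `E = e^{-a(P-b)}`, so that `E' = -a E`. Since `1 - d = 1/c`, the utility factors as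
`U = c · ((1 - d) - d E) / (1 + E)`, and `log U = log c + log((1 - d) - d E) - log(1 + E)`.
For `φ = log(α + β E)` one has `φ'' = a² α β E / (α + β E)²`, which is positive for
`(α, β) = (1, 1)` and negative for `(α, β) = (1 - d, -d)`. Finally
`(1 - d) - d E = (e^{ab} - E) / (1 + e^{ab})` is positive exactly when `P > 0`.
-/

open Real Filter Topology

section LogAffineExp

variable (a b α β : ℝ)

theorem hasDerivAt_exp_neg_mul_sub (x : ℝ) :
    HasDerivAt (fun x => exp (-a * (x - b))) (-a * exp (-a * (x - b))) x := by
  simpa [mul_comm] using (((hasDerivAt_id x).sub_const b).const_mul (-a)).exp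

theorem hasDerivAt_log_add_mul_exp {x : ℝ} (h : α + β * exp (-a * (x - b)) ≠ 0) :
    HasDerivAt (fun x => log (α + β * exp (-a * (x - b))))
      (-a * β * exp (-a * (x - b)) / (α + β * exp (-a * (x - b)))) x := by
  refine ((((hasDerivAt_exp_neg_mul_sub a b x).const_mul β).const_add α).log h).congr_deriv ?_
  ring

theorem hasDerivAt_mul_exp_div_add_mul_exp {x : ℝ} (h : α + β * exp (-a * (x - b)) ≠ 0) :
    HasDerivAt (fun x => -a * β * exp (-a * (x - b)) / (α + β * exp (-a * (x - b))))
      (a ^ 2 * α * β * exp (-a * (x - b)) / (α + β * exp (-a * (x - b))) ^ 2) x := by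
  have hE := hasDerivAt_exp_neg_mul_sub a b x
  refine ((hE.const_mul (-a * β)).div ((hE.const_mul β).const_add α) h).congr_deriv ?_
  ring

end LogAffineExp

section SigmoidalUtility

variable {a b c d : ℝ}

theorem mul_one_sub_eq_one (hc : c = (1 + exp (a * b)) / exp (a * b))
    (hd : d = 1 / (1 + exp (a * b))) : c * (1 - d) = 1 := by
  subst hc hd
  field_simp
  ring

theorem one_sub_add_neg_mul_exp_pos (ha : 0 < a) (hd : d = 1 / (1 + exp (a * b)))
    {x : ℝ} (hx : 0 < x) : 0 < 1 - d + -d * exp (-a * (x - b)) := by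
  have hlt : exp (-a * (x - b)) < exp (a * b) := exp_lt_exp.mpr (by nlinarith)
  have heq : 1 - d + -d * exp (-a * (x - b)) =
      (exp (a * b) - exp (-a * (x - b))) / (1 + exp (a * b)) := by
    subst hd
    field_simp
    ring
  rw [heq]
  exact div_pos (by linarith) (by positivity)

theorem log_sigmoidal_eq (hc : c ≠ 0) (x : ℝ) (hf : 1 - d + -d * exp (-a * (x - b)) ≠ 0) :
    log (c * (1 / (1 + exp (-a * (x - b))) - d)) =
      log c + log (1 - d + -d * exp (-a * (x - b))) - log (1 + 1 * exp (-a * (x - b))) := by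
  have hE : 1 + exp (-a * (x - b)) ≠ 0 := by positivity
  rw [one_mul, ← log_mul hc hf, ← log_div (mul_ne_zero hc hf) hE]
  congr 1
  field_simp
  ring

end SigmoidalUtility

theorem log_sigmoidal_second_deriv_neg_general
    (a b c d : ℝ) (ha : 0 < a)
    (hc : c = (1 + Real.exp (a * b)) / Real.exp (a * b))
    (hd : d = 1 / (1 + Real.exp (a * b)))
    (U : ℝ → ℝ)
    (hU : ∀ P : ℝ, U P = c * (1 / (1 + Real.exp (-a * (P - b))) - d)) :
    ∀ P : ℝ, 0 < P →
      HasDerivAt (deriv (fun P => Real.log (U P)))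
        (-(a ^ 2) * d * Real.exp (-a * (P - b))
            / (c * (1 - d * (1 + Real.exp (-a * (P - b)))) ^ 2)
          - a ^ 2 * Real.exp (-a * (P - b)) / (1 + Real.exp (-a * (P - b))) ^ 2) P ∧
      (-(a ^ 2) * d * Real.exp (-a * (P - b))
            / (c * (1 - d * (1 + Real.exp (-a * (P - b)))) ^ 2)
          - a ^ 2 * Real.exp (-a * (P - b)) / (1 + Real.exp (-a * (P - b))) ^ 2) < 0 := by
  intro P hP
  have hcd := mul_one_sub_eq_one hc hd
  have hc0 : c ≠ 0 := left_ne_zero_of_mul_eq_one hcd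
  have hpos := fun x (hx : 0 < x) => one_sub_add_neg_mul_exp_pos ha hd hx
  have h1E : ∀ x, 1 + 1 * exp (-a * (x - b)) ≠ 0 := fun x => by positivity
  have hfirst : ∀ᶠ x in 𝓝 P, deriv (fun P => log (U P)) x =
      -a * -d * exp (-a * (x - b)) / (1 - d + -d * exp (-a * (x - b))) -
        -a * 1 * exp (-a * (x - b)) / (1 + 1 * exp (-a * (x - b))) := by
    filter_upwards [Ioi_mem_nhds hP] with x hx
    refine HasDerivAt.deriv ?_
    refine (((hasDerivAt_log_add_mul_exp a b _ _ (hpos x hx).ne').const_add (log c)).sub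
      (hasDerivAt_log_add_mul_exp a b 1 1 (h1E x))).congr_of_eventuallyEq ?_
    filter_upwards [Ioi_mem_nhds hx] with y hy
    rw [hU, log_sigmoidal_eq hc0 y (hpos y hy).ne']
    rfl
  have hsecond := ((hasDerivAt_mul_exp_div_add_mul_exp a b _ _ (hpos P hP).ne').sub
    (hasDerivAt_mul_exp_div_add_mul_exp a b 1 1 (h1E P))).congr_of_eventuallyEq hfirst
  have hf : 1 - d * (1 + exp (-a * (P - b))) = 1 - d + -d * exp (-a * (P - b)) := by ring
  have hdpos : 0 < d := by rw [hd]; positivity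
  refine ⟨?_, ?_⟩
  · refine hsecond.congr_deriv ?_
    rw [hf, eq_inv_of_mul_eq_one_right hcd]
    field_simp
  · have hcpos : 0 < c := by rw [hc]; positivity
    have hfpos := hpos P hP
    rw [hf, neg_mul, neg_mul, neg_div, neg_sub_left, neg_lt_zero]
    positivity

/-- For the sigmoidal-like utility `U(P) = c·(1/(1 + e^{-a(P-b)}) − d)` with `a > 0`,
`b > 0`, `c = (1 + e^{ab})/e^{ab}`, `d = 1/(1 + e^{ab})`: for every `P > 0` the second
derivative of `P ↦ log U(P)` exists and equals
`−a²·d·e^{-a(P-b)}/(c·(1 − d·(1 + e^{-a(P-b)}))²) − a²·e^{-a(P-b)}/(1 + e^{-a(P-b)})²`,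
and this quantity is strictly negative. -/
theorem log_sigmoidal_second_deriv_neg
    (a b c d : ℝ) (ha : 0 < a) (hb : 0 < b)
    (hc : c = (1 + Real.exp (a * b)) / Real.exp (a * b))
    (hd : d = 1 / (1 + Real.exp (a * b)))
    (U : ℝ → ℝ)
    (hU : ∀ P : ℝ, U P = c * (1 / (1 + Real.exp (-a * (P - b))) - d)) :
    ∀ P : ℝ, 0 < P →
      HasDerivAt (deriv (fun P => Real.log (U P)))
        (-(a ^ 2) * d * Real.exp (-a * (P - b))
            / (c * (1 - d * (1 + Real.exp (-a * (P - b)))) ^ 2)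
          - a ^ 2 * Real.exp (-a * (P - b)) / (1 + Real.exp (-a * (P - b))) ^ 2) P ∧
      (-(a ^ 2) * d * Real.exp (-a * (P - b))
            / (c * (1 - d * (1 + Real.exp (-a * (P - b)))) ^ 2)
          - a ^ 2 * Real.exp (-a * (P - b)) / (1 + Real.exp (-a * (P - b))) ^ 2) < 0 :=
  log_sigmoidal_second_deriv_neg_general a b c d ha hc hd U hU
end

section
/- (Lemma 1) Let a > 0, b > 0 be real numbers, set c = (1 + e^{a b})/e^{a b} and d = 1/(1 + e^{a b}), and define U(P) = c·(1/(1 + e^{-a(P-b)}) − d). Then the function P ↦ log U(P) is strictly concave on the open interval (0, ∞). -/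
/-!
With `t = e^{-aP}` and `K = e^{ab}` the normalisation constants cancel to
`U(P) = (1 - t) / (1 + K t)`, so `log U(P) = log (1 - e^{-aP}) - log (1 + K e^{-aP})`.
The derivatives of the two terms, `a / (e^{aP} - 1)` and `aK / (e^{aP} + K)`, are both
antitone in `P`, the first one strictly on `(0, ∞)`.
-/

open Real Set

theorem hasDerivAt_log_one_add_mul_exp_neg_mul {a K x : ℝ} (h : 1 + K * exp (-a * x) ≠ 0) :
    HasDerivAt (fun x => log (1 + K * exp (-a * x))) (-(a * K) / (exp (a * x) + K)) x := by
  have hexp : HasDerivAt (fun x => 1 + K * exp (-a * x)) (K * (exp (-a * x) * -a)) x :=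
    (((hasDerivAt_id x).const_mul (-a)).exp.const_mul K).const_add 1 |>.congr_deriv (by simp)
  refine (hexp.log h).congr_deriv ?_
  have hinv : exp (-a * x) = (exp (a * x))⁻¹ := by rw [← exp_neg, neg_mul]
  rw [hinv] at h ⊢
  have hden : exp (a * x) + K ≠ 0 := by
    intro h0
    exact h (by field_simp; linarith)
  field_simp

theorem one_sub_exp_neg_mul_pos {a x : ℝ} (ha : 0 < a) (hx : 0 < x) : 0 < 1 - exp (-a * x) :=
  sub_pos.mpr (exp_lt_one_iff.mpr (by nlinarith))

theorem strictConcaveOn_log_one_sub_exp_neg_mul {a : ℝ} (ha : 0 < a) :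
    StrictConcaveOn ℝ (Ioi 0) (fun x => log (1 - exp (-a * x))) := by
  have hpos : ∀ x ∈ Ioi (0 : ℝ), 0 < 1 - exp (-a * x) := fun _ hx =>
    one_sub_exp_neg_mul_pos ha hx
  have hderiv : ∀ x ∈ Ioi (0 : ℝ), deriv (fun x => log (1 - exp (-a * x))) x
      = a / (exp (a * x) - 1) := fun x hx => by
    have h := hasDerivAt_log_one_add_mul_exp_neg_mul (K := -1)
      (by simpa [← sub_eq_add_neg] using (hpos x hx).ne')
    simp only [neg_one_mul, ← sub_eq_add_neg, mul_neg, mul_one, neg_neg] at h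
    exact h.deriv
  refine StrictAntiOn.strictConcaveOn_of_deriv (convex_Ioi 0) ?_ ?_
  · exact ContinuousOn.log (by fun_prop) fun x hx => (hpos x hx).ne'
  · rw [interior_Ioi]
    intro x hx y hy hxy
    have hx1 : 1 < exp (a * x) := one_lt_exp_iff.mpr (mul_pos ha hx)
    have hxy' : exp (a * x) < exp (a * y) := exp_lt_exp.mpr (by nlinarith)
    rw [hderiv x hx, hderiv y hy]
    exact div_lt_div_of_pos_left ha (by linarith) (by linarith)

theorem concaveOn_neg_log_one_add_mul_exp_neg_mul {a K : ℝ} (ha : 0 ≤ a) (hK : 0 ≤ K) :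
    ConcaveOn ℝ univ (fun x => -log (1 + K * exp (-a * x))) := by
  have hpos : ∀ x, 0 < 1 + K * exp (-a * x) := fun x => by positivity
  have hderiv : ∀ x, HasDerivAt (fun x => -log (1 + K * exp (-a * x)))
      (a * K / (exp (a * x) + K)) x := fun x =>
    (hasDerivAt_log_one_add_mul_exp_neg_mul (hpos x).ne').neg.congr_deriv (by ring)
  refine Antitone.concaveOn_univ_of_deriv (fun x => (hderiv x).differentiableAt) ?_
  intro x y hxy
  rw [(hderiv x).deriv, (hderiv y).deriv]
  have hxy' : exp (a * x) ≤ exp (a * y) := exp_le_exp.mpr (mul_le_mul_of_nonneg_left hxy ha)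
  exact div_le_div_of_nonneg_left (by positivity) (by positivity) (by linarith)

theorem log_sigmoidal_strictConcave_general
    (a b c d : ℝ) (ha : 0 < a)
    (hc : c = (1 + Real.exp (a * b)) / Real.exp (a * b))
    (hd : d = 1 / (1 + Real.exp (a * b)))
    (U : ℝ → ℝ)
    (hU : ∀ P : ℝ, U P = c * (1 / (1 + Real.exp (-a * (P - b))) - d)) :
    StrictConcaveOn ℝ (Ioi (0 : ℝ)) (fun P => Real.log (U P)) := by
  set K := exp (a * b)
  have hK : 0 < K := exp_pos _
  have hU_eq : ∀ P, U P = (1 - exp (-a * P)) / (1 + K * exp (-a * P)) := fun P => by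
    have hshift : exp (-a * (P - b)) = K * exp (-a * P) := by
      rw [← exp_add]; ring_nf
    rw [hU, hc, hd, hshift]
    field_simp
    ring
  refine ((strictConcaveOn_log_one_sub_exp_neg_mul ha).add_concaveOn
    ((concaveOn_neg_log_one_add_mul_exp_neg_mul ha.le hK.le).subset (subset_univ _)
      (convex_Ioi 0))).congr fun P hP => ?_
  rw [Pi.add_apply, hU_eq, log_div (one_sub_exp_neg_mul_pos ha hP).ne' (by positivity),
    sub_eq_add_neg (log _)]

/-- (Lemma 1) For the sigmoidal-like utility `U(P) = c·(1/(1 + e^{-a(P-b)}) − d)` with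
`a > 0`, `b > 0`, `c = (1 + e^{ab})/e^{ab}`, `d = 1/(1 + e^{ab})`, the function
`P ↦ log U(P)` is strictly concave on `(0, ∞)`. -/
theorem log_sigmoidal_strictConcave
    (a b c d : ℝ) (ha : 0 < a) (hb : 0 < b)
    (hc : c = (1 + Real.exp (a * b)) / Real.exp (a * b))
    (hd : d = 1 / (1 + Real.exp (a * b)))
    (U : ℝ → ℝ)
    (hU : ∀ P : ℝ, U P = c * (1 / (1 + Real.exp (-a * (P - b))) - d)) :
    StrictConcaveOn ℝ (Ioi (0 : ℝ)) (fun P => Real.log (U P)) :=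
  log_sigmoidal_strictConcave_general a b c d ha hc hd U hU
end

section
/- (Theorem 1, logarithmic form) Let M ≥ 1, let a_i > 0 and b_i > 0 for i = 1,…,M, set c_i = (1 + e^{a_i b_i})/e^{a_i b_i}, d_i = 1/(1 + e^{a_i b_i}) and U_i(P) = c_i·(1/(1 + e^{-a_i(P-b_i)}) − d_i), and let P_T > 0. Then there exists a unique point P* in the feasible set F = { P ∈ ℝ^M : P_i > 0 for all i and Σ_{i=1}^M P_i ≤ P_T } that maximizes the objective Σ_{i=1}^M log U_i(P_i) over F. -/
open Real Finset

open Filter Topology Set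

/-!
Clearing denominators gives `U_i(P) = (e^{a_i P} - 1) / (e^{a_i P} + e^{a_i b_i}) ∈ (0, 1]` for
`P > 0`. So each `log U_i` is nonpositive, tends to `-∞` as `P → 0⁺`, and is strictly concave:
with `s = e^{a P}` and `K = e^{a b}` its derivative is `a (K + 1) s / ((s - 1)(s + K))`, a
decreasing function of `s`. Nonpositivity and the blow-up at `0` confine every point at least as
good as a fixed feasible one to the compact set where all `P_i ≥ ε`, so a maximizer exists; the
objective is a separable sum of strictly concave functions on the convex set `F`, so it is unique.
-/

noncomputable def sigmoidUtility (a K x : ℝ) : ℝ :=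
  (exp (a * x) - 1) / (exp (a * x) + K)

lemma normalized_sigmoid_eq_sigmoidUtility (a b P : ℝ) :
    (1 + exp (a * b)) / exp (a * b) * (1 / (1 + exp (-a * (P - b))) - 1 / (1 + exp (a * b))) =
      sigmoidUtility a (exp (a * b)) P := by
  rw [sigmoidUtility, show -a * (P - b) = a * b - a * P by ring, exp_sub]
  have := exp_pos (a * b)
  have := exp_pos (a * P)
  field_simp
  ring

lemma strictAntiOn_div_sub_one_mul_add {K : ℝ} (hK : 0 ≤ K) :
    StrictAntiOn (fun s => s / ((s - 1) * (s + K))) (Ioi 1) := by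
  intro s (hs : 1 < s) t (ht : 1 < t) hst
  rw [div_lt_div_iff₀ (by nlinarith) (by nlinarith)]
  nlinarith [mul_pos (mul_pos (one_pos.trans hs) (one_pos.trans ht)) (sub_pos.2 hst),
    mul_nonneg hK (sub_pos.2 hst).le]

section sigmoidUtility

variable {a K : ℝ}

lemma sigmoidUtility_le_one (hK : 0 ≤ K) (x : ℝ) : sigmoidUtility a K x ≤ 1 :=
  (div_le_one (by positivity)).2 (by linarith)

lemma sigmoidUtility_pos (ha : 0 < a) (hK : 0 ≤ K) {x : ℝ} (hx : 0 < x) :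
    0 < sigmoidUtility a K x := by
  have := one_lt_exp_iff.2 (mul_pos ha hx)
  exact div_pos (by linarith) (by positivity)

lemma continuous_sigmoidUtility (hK : 0 ≤ K) : Continuous (sigmoidUtility a K) :=
  (by fun_prop : Continuous fun x => exp (a * x) - 1).div (by fun_prop) fun x => by positivity

lemma hasDerivAt_log_sigmoidUtility (ha : 0 < a) (hK : 0 ≤ K) {x : ℝ} (hx : 0 < x) :
    HasDerivAt (fun y => log (sigmoidUtility a K y))
      (a * (K + 1) * (exp (a * x) / ((exp (a * x) - 1) * (exp (a * x) + K)))) x := by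
  have hexp_gt := one_lt_exp_iff.2 (mul_pos ha hx)
  have hexp : HasDerivAt (fun y => exp (a * y)) (exp (a * x) * a) x := by
    simpa using ((hasDerivAt_id x).const_mul a).exp
  have hquot := (hexp.sub_const 1).div (hexp.add_const K) (by positivity)
  apply (hquot.log (sigmoidUtility_pos ha hK hx).ne').congr_deriv
  have : exp (a * x) - 1 ≠ 0 := by linarith
  simp only [Pi.div_apply]
  field_simp
  ring

lemma strictConcaveOn_log_sigmoidUtility (ha : 0 < a) (hK : 0 ≤ K) :
    StrictConcaveOn ℝ (Ioi 0) fun x => log (sigmoidUtility a K x) := by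
  refine StrictAntiOn.strictConcaveOn_of_deriv (convex_Ioi 0)
    ((continuous_sigmoidUtility hK).continuousOn.log fun x hx =>
      (sigmoidUtility_pos ha hK hx).ne') ?_
  rw [interior_Ioi]
  have hexp : StrictMonoOn (fun x => exp (a * x)) (Ioi 0) := fun x _ y _ hxy =>
    exp_lt_exp.2 (mul_lt_mul_of_pos_left hxy ha)
  have hmaps : MapsTo (fun x => exp (a * x)) (Ioi 0) (Ioi 1) := fun x hx =>
    one_lt_exp_iff.2 (mul_pos ha hx)
  intro x hx y hy hxy
  rw [(hasDerivAt_log_sigmoidUtility ha hK hx).deriv,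
    (hasDerivAt_log_sigmoidUtility ha hK hy).deriv]
  exact mul_lt_mul_of_pos_left
    ((strictAntiOn_div_sub_one_mul_add hK).comp_strictMonoOn hexp hmaps hx hy hxy) (by positivity)

lemma tendsto_log_sigmoidUtility_nhdsGT_zero (ha : 0 < a) (hK : 0 ≤ K) :
    Tendsto (fun x => log (sigmoidUtility a K x)) (𝓝[>] 0) atBot := by
  refine tendsto_log_nhdsGT_zero.comp
    (tendsto_nhdsWithin_of_tendsto_nhds_of_eventually_within _ ?_ ?_)
  · simpa [sigmoidUtility] using
      ((continuous_sigmoidUtility hK).tendsto 0).mono_left nhdsWithin_le_nhds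
  · filter_upwards [self_mem_nhdsWithin] with x hx using sigmoidUtility_pos ha hK hx

end sigmoidUtility

def feasibleSet (ι : Type*) [Fintype ι] (PT : ℝ) : Set (ι → ℝ) :=
  {P | (∀ i, 0 < P i) ∧ ∑ i, P i ≤ PT}

section FeasibleSet

variable {ι : Type*} [Fintype ι] {PT : ℝ}

lemma convex_feasibleSet : Convex ℝ (feasibleSet ι PT) := by
  rintro P ⟨hP, hPsum⟩ Q ⟨hQ, hQsum⟩ s t hs ht hst
  refine ⟨fun i => convex_Ioi (0 : ℝ) (hP i) (hQ i) hs ht hst, ?_⟩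
  simp only [Pi.add_apply, Pi.smul_apply, smul_eq_mul, sum_add_distrib, ← mul_sum]
  calc s * ∑ i, P i + t * ∑ i, Q i ≤ s * PT + t * PT := by gcongr
    _ = PT := by rw [← add_mul, hst, one_mul]

lemma feasibleSet_nonempty (hPT : 0 < PT) : (feasibleSet ι PT).Nonempty := by
  refine ⟨fun _ => PT / (Fintype.card ι + 1), fun _ => by positivity, ?_⟩
  rw [sum_const, card_univ, nsmul_eq_mul, mul_div_assoc', div_le_iff₀ (by positivity)]
  nlinarith

lemma isCompact_setOf_forall_le_and_sum_le {ε : ℝ} (hε : 0 ≤ ε) :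
    IsCompact {P : ι → ℝ | (∀ i, ε ≤ P i) ∧ ∑ i, P i ≤ PT} := by
  refine (isCompact_univ_pi fun _ => isCompact_Icc (a := ε) (b := PT)).of_isClosed_subset ?_ ?_
  · rw [ofPred_and, ofPred_forall]
    exact (isClosed_iInter fun i => isClosed_le continuous_const (continuous_apply i)).inter
      (isClosed_le (continuous_finsetSum _ fun i _ => continuous_apply i) continuous_const)
  · rintro P ⟨hεP, hsum⟩ i -
    exact ⟨hεP i, (single_le_sum (fun j _ => hε.trans (hεP j)) (mem_univ i)).trans hsum⟩

theorem strictConcaveOn_sum_apply {E : Type*} [AddCommGroup E] [Module ℝ E] {s : ι → Set E}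
    {g : ι → E → ℝ} (hg : ∀ i, StrictConcaveOn ℝ (s i) (g i)) :
    StrictConcaveOn ℝ (univ.pi s) fun x => ∑ i, g i (x i) := by
  refine ⟨convex_pi fun i _ => (hg i).1, fun x hx y hy hxy a b ha hb hab => ?_⟩
  obtain ⟨j, hj⟩ := Function.ne_iff.1 hxy
  simp only [Pi.add_apply, Pi.smul_apply, smul_eq_mul, mul_sum, ← sum_add_distrib]
  exact sum_lt_sum (fun i _ => (hg i).concaveOn.2 (hx i trivial) (hy i trivial) ha.le hb.le hab)
    ⟨j, mem_univ j, (hg j).2 (hx j trivial) (hy j trivial) hj ha hb hab⟩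

theorem exists_isMaxOn_sum_feasibleSet {g : ι → ℝ → ℝ} (hPT : 0 < PT)
    (hcont : ∀ i, ContinuousOn (g i) (Ioi 0)) (hnonpos : ∀ i, ∀ x > 0, g i x ≤ 0)
    (hlim : ∀ i, Tendsto (g i) (𝓝[>] 0) atBot) :
    ∃ P ∈ feasibleSet ι PT, IsMaxOn (fun P => ∑ i, g i (P i)) (feasibleSet ι PT) P := by
  set S := fun P : ι → ℝ => ∑ i, g i (P i)
  obtain ⟨P₀, hP₀⟩ := feasibleSet_nonempty hPT (ι := ι)
  obtain ⟨ε, hε, hεS⟩ : ∃ ε > 0, Set.Ioo 0 ε ⊆ {x | ∀ i, g i x < S P₀} :=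
    mem_nhdsGT_iff_exists_Ioo_subset.1 (eventually_all.2 fun i => (hlim i).eventually_lt_atBot _)
  set K := {P : ι → ℝ | (∀ i, ε ≤ P i) ∧ ∑ i, P i ≤ PT}
  have hKF : K ⊆ feasibleSet ι PT := fun P hP => ⟨fun i => hε.trans_le (hP.1 i), hP.2⟩
  -- Since every term is nonpositive, a single coordinate below `ε` already makes `S Q < S P₀`.
  have hK : ∀ Q ∈ feasibleSet ι PT, S P₀ ≤ S Q → Q ∈ K := by
    refine fun Q hQ hle => ⟨fun i => not_lt.1 fun hi => ?_, hQ.2⟩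
    have : S Q ≤ g i (Q i) := by
      simpa using sum_le_sum_of_subset_of_nonpos' (subset_univ {i})
        fun j _ _ => hnonpos j (Q j) (hQ.1 j)
    linarith [hεS ⟨hQ.1 i, hi⟩ i]
  have hScont : ContinuousOn S K := continuousOn_finsetSum _ fun i _ =>
    (hcont i).comp (continuous_apply i).continuousOn fun P hP => hε.trans_le (hP.1 i)
  obtain ⟨Pm, hPmK, hPm⟩ := (isCompact_setOf_forall_le_and_sum_le hε.le).exists_isMaxOn
    ⟨P₀, hK P₀ hP₀ le_rfl⟩ hScont
  refine ⟨Pm, hKF hPmK, fun Q hQ => ?_⟩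
  by_cases hle : S P₀ ≤ S Q
  · exact hPm (hK Q hQ hle)
  · exact (not_le.1 hle).le.trans (hPm (hK P₀ hP₀ le_rfl))

theorem existsUnique_isMaxOn_sum_feasibleSet {g : ι → ℝ → ℝ} (hPT : 0 < PT)
    (hconc : ∀ i, StrictConcaveOn ℝ (Ioi 0) (g i)) (hnonpos : ∀ i, ∀ x > 0, g i x ≤ 0)
    (hlim : ∀ i, Tendsto (g i) (𝓝[>] 0) atBot) :
    ∃! P, P ∈ feasibleSet ι PT ∧
      IsMaxOn (fun P => ∑ i, g i (P i)) (feasibleSet ι PT) P := by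
  obtain ⟨P, hP, hmax⟩ := exists_isMaxOn_sum_feasibleSet hPT
    (fun i => (hconc i).concaveOn.continuousOn isOpen_Ioi) hnonpos hlim
  have hconcF : StrictConcaveOn ℝ (feasibleSet ι PT) fun P => ∑ i, g i (P i) :=
    (strictConcaveOn_sum_apply hconc).subset (fun P hP i _ => hP.1 i) convex_feasibleSet
  exact ⟨P, ⟨hP, hmax⟩, fun Q ⟨hQ, hQmax⟩ => hconcF.eq_of_isMaxOn hQmax hmax hQ hP⟩

end FeasibleSet

theorem exists_unique_maximizer_sum_log_general
    (M : ℕ)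
    (a b c d : Fin M → ℝ)
    (ha : ∀ i, 0 < a i)
    (hc : ∀ i, c i = (1 + Real.exp (a i * b i)) / Real.exp (a i * b i))
    (hd : ∀ i, d i = 1 / (1 + Real.exp (a i * b i)))
    (U : Fin M → ℝ → ℝ)
    (hU : ∀ i (P : ℝ), U i P = c i * (1 / (1 + Real.exp (-(a i) * (P - b i))) - d i))
    (PT : ℝ) (hPT : 0 < PT)
    (F : Set (Fin M → ℝ))
    (hF : F = {P : Fin M → ℝ | (∀ i, 0 < P i) ∧ ∑ i, P i ≤ PT}) :
    ∃! Pstar : Fin M → ℝ, Pstar ∈ F ∧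
      ∀ Q ∈ F, ∑ i, Real.log (U i (Q i)) ≤ ∑ i, Real.log (U i (Pstar i)) := by
  have hUeq : U = fun i => sigmoidUtility (a i) (exp (a i * b i)) := by
    ext i P
    rw [hU, hc, hd, normalized_sigmoid_eq_sigmoidUtility]
  subst hUeq hF
  have hK : ∀ i, 0 ≤ exp (a i * b i) := fun i => (exp_pos _).le
  exact existsUnique_isMaxOn_sum_feasibleSet hPT
    (fun i => strictConcaveOn_log_sigmoidUtility (ha i) (hK i))
    (fun i x hx => log_nonpos (sigmoidUtility_pos (ha i) (hK i) hx).le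
      (sigmoidUtility_le_one (hK i) x))
    (fun i => tendsto_log_sigmoidUtility_nhdsGT_zero (ha i) (hK i))

/-- (Theorem 1, logarithmic form) For `M ≥ 1` users with sigmoidal-like utilities
`U_i(P) = c_i·(1/(1 + e^{-a_i(P-b_i)}) − d_i)` and total power `P_T > 0`, there is a
unique point of the feasible set `F = {P : ∀ i, P_i > 0, Σ P_i ≤ P_T}` maximizing
`Σ_i log U_i(P_i)` over `F`. -/
theorem exists_unique_maximizer_sum_log
    (M : ℕ) (hM : 1 ≤ M)
    (a b c d : Fin M → ℝ)
    (ha : ∀ i, 0 < a i) (hb : ∀ i, 0 < b i)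
    (hc : ∀ i, c i = (1 + Real.exp (a i * b i)) / Real.exp (a i * b i))
    (hd : ∀ i, d i = 1 / (1 + Real.exp (a i * b i)))
    (U : Fin M → ℝ → ℝ)
    (hU : ∀ i (P : ℝ), U i P = c i * (1 / (1 + Real.exp (-(a i) * (P - b i))) - d i))
    (PT : ℝ) (hPT : 0 < PT)
    (F : Set (Fin M → ℝ))
    (hF : F = {P : Fin M → ℝ | (∀ i, 0 < P i) ∧ ∑ i, P i ≤ PT}) :
    ∃! Pstar : Fin M → ℝ, Pstar ∈ F ∧
      ∀ Q ∈ F, ∑ i, Real.log (U i (Q i)) ≤ ∑ i, Real.log (U i (Pstar i)) :=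
  exists_unique_maximizer_sum_log_general M a b c d ha hc hd U hU PT hPT F hF
end

section
/- (Theorem 1, product form) Let M ≥ 1, let a_i > 0 and b_i > 0 for i = 1,…,M, set c_i = (1 + e^{a_i b_i})/e^{a_i b_i}, d_i = 1/(1 + e^{a_i b_i}) and U_i(P) = c_i·(1/(1 + e^{-a_i(P-b_i)}) − d_i), and let P_T > 0. Then there exists a unique point P* in the feasible set F = { P ∈ ℝ^M : P_i > 0 for all i and Σ_{i=1}^M P_i ≤ P_T } that maximizes the network utility ∏_{i=1}^M U_i(P_i) over F. -/
open Real Finset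
set_option maxHeartbeats 1000000

private lemma key_alg (K u v w : ℝ) (hK : 0 < K) (hu : 0 < u) (hv : 0 < v)
    (hw : 0 ≤ w) (hw2 : w ^ 2 = u * v) (huv : u ≠ v) :
    (1 - u) * (1 - v) * (1 + K * w) ^ 2 < (1 - w) ^ 2 * ((1 + K * u) * (1 + K * v)) := by
  have hsq : 0 < (u - v) ^ 2 := by
    have : u - v ≠ 0 := sub_ne_zero.mpr huv
    positivity
  have h1 : 2 * w < u + v := by nlinarith
  have hid : (1 - w) ^ 2 * ((1 + K * u) * (1 + K * v)) -
      (1 - u) * (1 - v) * (1 + K * w) ^ 2 =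
      (u + v - 2 * w) * (1 + K) * (1 + K * (u * v)) +
      (w ^ 2 - u * v) * ((1 + K * u) * (1 + K * v) - K ^ 2 * ((1 - u) * (1 - v))) := by
    ring
  have h0 : (w ^ 2 - u * v) * ((1 + K * u) * (1 + K * v) - K ^ 2 * ((1 - u) * (1 - v))) = 0 := by
    rw [hw2, sub_self, zero_mul]
  have hpos : 0 < (u + v - 2 * w) * (1 + K) * (1 + K * (u * v)) := by
    apply mul_pos (mul_pos (by linarith) (by linarith))
    positivity
  linarith


/-- (Theorem 1, product form) For `M ≥ 1` users with sigmoidal-like utilities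
`U_i(P) = c_i·(1/(1 + e^{-a_i(P-b_i)}) − d_i)` and total power `P_T > 0`, there is a
unique point of the feasible set `F = {P : ∀ i, P_i > 0, Σ P_i ≤ P_T}` maximizing the
network utility `∏_i U_i(P_i)` over `F`. -/
theorem exists_unique_maximizer_prod
    (M : ℕ) (hM : 1 ≤ M)
    (a b c d : Fin M → ℝ)
    (ha : ∀ i, 0 < a i) (hb : ∀ i, 0 < b i)
    (hc : ∀ i, c i = (1 + Real.exp (a i * b i)) / Real.exp (a i * b i))
    (hd : ∀ i, d i = 1 / (1 + Real.exp (a i * b i)))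
    (U : Fin M → ℝ → ℝ)
    (hU : ∀ i (P : ℝ), U i P = c i * (1 / (1 + Real.exp (-(a i) * (P - b i))) - d i))
    (PT : ℝ) (hPT : 0 < PT)
    (F : Set (Fin M → ℝ))
    (hF : F = {P : Fin M → ℝ | (∀ i, 0 < P i) ∧ ∑ i, P i ≤ PT}) :
    ∃! Pstar : Fin M → ℝ, Pstar ∈ F ∧
      ∀ Q ∈ F, ∏ i, U i (Q i) ≤ ∏ i, U i (Pstar i) := by
  subst hF
  -- closed form for the utility
  have hU' : ∀ i (P : ℝ), U i P =
      (1 - Real.exp (-(a i) * P)) / (1 + Real.exp (a i * b i) * Real.exp (-(a i) * P)) := by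
    intro i P
    rw [hU, hc, hd]
    have hE : Real.exp (-(a i) * (P - b i)) = Real.exp (a i * b i) * Real.exp (-(a i) * P) := by
      rw [← Real.exp_add]; ring_nf
    rw [hE]
    have h1 : (0:ℝ) < Real.exp (a i * b i) := Real.exp_pos _
    have h2 : (0:ℝ) < Real.exp (-(a i) * P) := Real.exp_pos _
    have h3 : (0:ℝ) < 1 + Real.exp (a i * b i) * Real.exp (-(a i) * P) := by positivity
    have h4 : (0:ℝ) < 1 + Real.exp (a i * b i) := by positivity
    field_simp
    ring
  have hUpos : ∀ i (P : ℝ), 0 < P → 0 < U i P := by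
    intro i P hP
    rw [hU']
    apply div_pos
    · have h1 : Real.exp (-(a i) * P) < 1 := by
        rw [Real.exp_lt_one_iff]
        nlinarith [ha i]
      linarith
    · positivity
  have hU0 : ∀ i, U i 0 = 0 := by
    intro i; rw [hU']; simp
  have hUcont : ∀ i, Continuous (U i) := by
    intro i
    have heq : U i = fun P => (1 - Real.exp (-(a i) * P)) /
        (1 + Real.exp (a i * b i) * Real.exp (-(a i) * P)) := funext (hU' i)
    rw [heq]
    apply Continuous.div (by continuity) (by continuity)
    intro x
    have h1 := Real.exp_pos (-(a i) * x)
    have h2 := Real.exp_pos (a i * b i)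
    positivity
  -- strict multiplicative midpoint concavity
  have hmid : ∀ i (x y : ℝ), 0 < x → 0 < y → x ≠ y →
      U i x * U i y < (U i ((x + y) / 2)) ^ 2 := by
    intro i x y hx hy hxy
    set K := Real.exp (a i * b i) with hKdef
    set u := Real.exp (-(a i) * x) with hudef
    set v := Real.exp (-(a i) * y) with hvdef
    set w := Real.exp (-(a i) * ((x + y) / 2)) with hwdef
    have hKpos : 0 < K := Real.exp_pos _
    have hu : 0 < u := Real.exp_pos _
    have hv : 0 < v := Real.exp_pos _
    have hw : 0 < w := Real.exp_pos _
    have hw2 : w ^ 2 = u * v := by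
      rw [hudef, hvdef, hwdef, sq, ← Real.exp_add, ← Real.exp_add]
      ring_nf
    have huv : u ≠ v := by
      intro h
      apply hxy
      have h2 : -(a i) * x = -(a i) * y := Real.exp_eq_exp.mp h
      have hai : (-(a i)) ≠ 0 := by have := ha i; intro h'; nlinarith
      exact mul_left_cancel₀ hai h2
    rw [hU' i x, hU' i y, hU' i ((x + y) / 2)]
    rw [div_mul_div_comm, div_pow, div_lt_div_iff₀ (by positivity) (by positivity)]
    exact key_alg K u v w hKpos hu hv hw.le hw2 huv
  -- the objective and the compact relaxed feasible set
  set f : (Fin M → ℝ) → ℝ := fun P => ∏ i, U i (P i) with hfdef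
  have hfcont : Continuous f :=
    continuous_finset_prod _ fun i _ => (hUcont i).comp (continuous_apply i)
  set C : Set (Fin M → ℝ) := {P | (∀ i, 0 ≤ P i) ∧ ∑ i, P i ≤ PT} with hCdef
  have hCsub : {P : Fin M → ℝ | (∀ i, 0 < P i) ∧ ∑ i, P i ≤ PT} ⊆ C :=
    fun P hP => ⟨fun i => (hP.1 i).le, hP.2⟩
  have hCeq : C = (Set.Icc (fun _ => (0:ℝ)) (fun _ => PT)) ∩ {P | ∑ i, P i ≤ PT} := by
    ext P
    simp only [hCdef, Set.mem_setOf_eq, Set.mem_inter_iff, Set.mem_Icc, Pi.le_def]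
    constructor
    · rintro ⟨h1, h2⟩
      refine ⟨⟨fun i => h1 i, fun i => ?_⟩, h2⟩
      calc P i ≤ ∑ j, P j := Finset.single_le_sum (fun j _ => h1 j) (Finset.mem_univ i)
        _ ≤ PT := h2
    · rintro ⟨⟨h1, _⟩, h2⟩
      exact ⟨fun i => h1 i, h2⟩
  have hCcomp : IsCompact C := by
    rw [hCeq]
    exact isCompact_Icc.inter_right
      (isClosed_le (continuous_finset_sum _ fun i _ => continuous_apply i) continuous_const)
  have hC0 : (0 : Fin M → ℝ) ∈ C := by
    constructor
    · intro i; simp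
    · simp [hPT.le]
  obtain ⟨Pstar, hPstarC, hPstarmax⟩ := hCcomp.exists_isMaxOn ⟨0, hC0⟩ hfcont.continuousOn
  -- the max value is positive
  have hMpos : (0:ℝ) < M := by exact_mod_cast hM
  have hQ0F : (fun _ => PT / M : Fin M → ℝ) ∈
      {P : Fin M → ℝ | (∀ i, 0 < P i) ∧ ∑ i, P i ≤ PT} := by
    constructor
    · intro i; exact div_pos hPT hMpos
    · rw [Finset.sum_const, Finset.card_univ, Fintype.card_fin, nsmul_eq_mul]
      rw [mul_div_cancel₀ _ (ne_of_gt hMpos)]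
  have hfQ0 : 0 < f (fun _ => PT / M) :=
    Finset.prod_pos fun i _ => hUpos i _ (div_pos hPT hMpos)
  have hfP : 0 < f Pstar := lt_of_lt_of_le hfQ0 (hPstarmax (hCsub hQ0F))
  have hPstarpos : ∀ i, 0 < Pstar i := by
    intro i
    rcases (hPstarC.1 i).lt_or_eq with h | h
    · exact h
    · exfalso
      have : f Pstar = 0 := Finset.prod_eq_zero (Finset.mem_univ i) (by rw [← h, hU0])
      rw [this] at hfP; exact lt_irrefl _ hfP
  have hPstarF : Pstar ∈ {P : Fin M → ℝ | (∀ i, 0 < P i) ∧ ∑ i, P i ≤ PT} :=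
    ⟨hPstarpos, hPstarC.2⟩
  have hPmaxF : ∀ Q ∈ {P : Fin M → ℝ | (∀ i, 0 < P i) ∧ ∑ i, P i ≤ PT},
      f Q ≤ f Pstar := fun Q hQ => hPstarmax (hCsub hQ)
  refine ⟨Pstar, ⟨hPstarF, hPmaxF⟩, ?_⟩
  -- uniqueness
  rintro Q ⟨hQF, hQmax⟩
  by_contra hne
  have hfeq : f Q = f Pstar := le_antisymm (hPmaxF Q hQF) (hQmax Pstar hPstarF)
  set R : Fin M → ℝ := fun i => (Q i + Pstar i) / 2 with hRdef
  have hRF : R ∈ {P : Fin M → ℝ | (∀ i, 0 < P i) ∧ ∑ i, P i ≤ PT} := by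
    constructor
    · intro i
      have h1 := hQF.1 i; have h2 := hPstarpos i
      simp only [hRdef]; linarith
    · have : ∑ i, R i = (∑ i, Q i + ∑ i, Pstar i) / 2 := by
        simp only [hRdef]
        rw [← Finset.sum_div, Finset.sum_add_distrib]
      rw [this]
      have h1 := hQF.2; have h2 := hPstarC.2
      linarith
  have hex : ∃ i, Q i ≠ Pstar i := by
    by_contra h; push_neg at h; exact hne (funext h)
  obtain ⟨i0, hi0⟩ := hex
  have hlt : ∏ i, (U i (Q i) * U i (Pstar i)) < ∏ i, (U i (R i)) ^ 2 := by
    apply Finset.prod_lt_prod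
    · intro i _
      exact mul_pos (hUpos i _ (hQF.1 i)) (hUpos i _ (hPstarpos i))
    · intro i _
      rcases eq_or_ne (Q i) (Pstar i) with h | h
      · have hR : R i = Pstar i := by simp only [hRdef]; rw [h]; ring
        rw [hR, h, sq]
      · exact (hmid i _ _ (hQF.1 i) (hPstarpos i) h).le
    · exact ⟨i0, Finset.mem_univ i0, hmid i0 _ _ (hQF.1 i0) (hPstarpos i0) hi0⟩
  rw [Finset.prod_mul_distrib, Finset.prod_pow] at hlt
  have hfR : f R ≤ f Pstar := hPmaxF R hRF
  have hfRpos : 0 < f R := Finset.prod_pos fun i _ => hUpos i _ (hRF.1 i)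
  nlinarith [hlt, hfR, hfRpos, hfeq, hfP]
end

section
/- Let a > 0, b > 0 be real numbers, set c = (1 + e^{a b})/e^{a b} and d = 1/(1 + e^{a b}), define U(P) = c·(1/(1 + e^{-a(P-b)}) − d), and let S(P) denote the derivative of P ↦ log U(P) at P. Let p > 0 and suppose P* > 0 satisfies S(P*) = p. Then P* is the unique maximizer over (0, ∞) of the user objective P ↦ log U(P) − p·P. -/
/-!
With `t = exp (a P)` and `E = exp (a b)`, the normalized utility is `U = (t - 1) / (t + E)`, so
`(log U)' = a / (t - 1) + a E / (t + E)` is strictly decreasing on `P > 0`. Hence the objective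
`log U - p P` is strictly concave there, and a critical point of a strictly concave function is its
unique maximizer.
-/

open Real Set

theorem StrictConcaveOn.lt_of_hasDerivAt_eq_zero {S : Set ℝ} {f : ℝ → ℝ} {x y : ℝ}
    (hf : StrictConcaveOn ℝ S f) (hx : x ∈ S) (hy : y ∈ S) (hyx : y ≠ x)
    (hfx : HasDerivAt f 0 x) : f y < f x := by
  rcases hyx.lt_or_gt with hlt | hgt
  · have := hf.lt_slope_of_hasDerivAt hy hx hlt hfx
    rw [slope_def_field, lt_div_iff₀ (sub_pos.2 hlt), zero_mul] at this
    linarith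
  · have := hf.slope_lt_of_hasDerivAt hx hy hgt hfx
    rw [slope_def_field, div_lt_iff₀ (sub_pos.2 hgt), zero_mul] at this
    linarith

theorem normalized_sigmoid_eq (a b P : ℝ) :
    (1 + exp (a * b)) / exp (a * b) * (1 / (1 + exp (-a * (P - b))) - 1 / (1 + exp (a * b))) =
      (exp (a * P) - 1) / (exp (a * P) + exp (a * b)) := by
  have hsplit : exp (-a * (P - b)) = exp (a * b) / exp (a * P) := by
    rw [← exp_sub]; ring_nf
  rw [hsplit]
  have := exp_pos (a * P)
  have := exp_pos (a * b)
  field_simp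
  ring

noncomputable def logUtility (a E P : ℝ) : ℝ :=
  log ((exp (a * P) - 1) / (exp (a * P) + E))

noncomputable def logUtilitySlope (a E P : ℝ) : ℝ :=
  a / (exp (a * P) - 1) + a * E / (exp (a * P) + E)

section

variable {a E : ℝ}

theorem one_lt_exp_mul (ha : 0 < a) {P : ℝ} (hP : 0 < P) : 1 < exp (a * P) :=
  one_lt_exp_iff.2 (mul_pos ha hP)

theorem hasDerivAt_logUtility (ha : 0 < a) (hE : 0 ≤ E) {P : ℝ} (hP : 0 < P) :
    HasDerivAt (logUtility a E) (logUtilitySlope a E P) P := by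
  have ht := one_lt_exp_mul ha hP
  have hexp : HasDerivAt (fun P => exp (a * P)) (exp (a * P) * a) P := by
    simpa using ((hasDerivAt_id P).const_mul a).exp
  have hnum := (hexp.sub_const 1).log (by linarith)
  have hden := (hexp.add_const E).log (by linarith)
  have hlog : logUtility a E =ᶠ[nhds P]
      fun P => log (exp (a * P) - 1) - log (exp (a * P) + E) := by
    filter_upwards [Ioi_mem_nhds hP] with Q hQ
    have := one_lt_exp_mul ha hQ
    exact log_div (by linarith) (by linarith)
  refine ((hnum.sub hden).congr_of_eventuallyEq hlog).congr_deriv ?_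
  rw [logUtilitySlope]
  field_simp [show exp (a * P) - 1 ≠ 0 by linarith, show exp (a * P) + E ≠ 0 by linarith]
  ring

theorem strictAntiOn_logUtilitySlope (ha : 0 < a) (hE : 0 ≤ E) :
    StrictAntiOn (logUtilitySlope a E) (Ioi 0) := by
  intro P hP Q hQ hPQ
  have hP1 := one_lt_exp_mul ha hP
  have hlt : exp (a * P) < exp (a * Q) := exp_lt_exp.2 (by nlinarith)
  have h1 : a / (exp (a * Q) - 1) < a / (exp (a * P) - 1) :=
    div_lt_div_of_pos_left ha (by linarith) (by linarith)
  have h2 : a * E / (exp (a * Q) + E) ≤ a * E / (exp (a * P) + E) :=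
    div_le_div_of_nonneg_left (by positivity) (by linarith) (by linarith)
  simp only [logUtilitySlope]
  linarith

theorem hasDerivAt_logUtility_sub_mul (ha : 0 < a) (hE : 0 ≤ E) (p : ℝ) {P : ℝ} (hP : 0 < P) :
    HasDerivAt (fun P => logUtility a E P - p * P) (logUtilitySlope a E P - p) P :=
  (hasDerivAt_logUtility ha hE hP).fun_sub (hasDerivAt_const_mul p)

theorem strictConcaveOn_logUtility_sub_mul (ha : 0 < a) (hE : 0 ≤ E) (p : ℝ) :
    StrictConcaveOn ℝ (Ioi 0) fun P => logUtility a E P - p * P := by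
  have hderiv := fun P (hP : P ∈ Ioi (0 : ℝ)) => hasDerivAt_logUtility_sub_mul ha hE p hP
  refine StrictAntiOn.strictConcaveOn_of_deriv (convex_Ioi 0)
    (fun P hP => (hderiv P hP).continuousAt.continuousWithinAt) ?_
  rw [interior_Ioi]
  intro P hP Q hQ hPQ
  rw [(hderiv P hP).deriv, (hderiv Q hQ).deriv]
  linarith [strictAntiOn_logUtilitySlope ha hE hP hQ hPQ]

end

theorem user_subproblem_unique_maximizer_general
    (a b c d : ℝ) (ha : 0 < a)
    (hc : c = (1 + Real.exp (a * b)) / Real.exp (a * b))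
    (hd : d = 1 / (1 + Real.exp (a * b)))
    (U : ℝ → ℝ)
    (hU : ∀ P : ℝ, U P = c * (1 / (1 + Real.exp (-a * (P - b))) - d))
    (S : ℝ → ℝ) (hS : ∀ P : ℝ, S P = deriv (fun P => Real.log (U P)) P)
    (p : ℝ)
    (Pstar : ℝ) (hPstar : 0 < Pstar) (hfoc : S Pstar = p) :
    (∀ Q : ℝ, 0 < Q →
        Real.log (U Q) - p * Q ≤ Real.log (U Pstar) - p * Pstar) ∧
    (∀ Q : ℝ, 0 < Q →
        Real.log (U Q) - p * Q = Real.log (U Pstar) - p * Pstar → Q = Pstar) := by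
  have hE : 0 ≤ exp (a * b) := (exp_pos _).le
  have hlogU : (fun P => log (U P)) = logUtility a (exp (a * b)) := by
    funext P
    rw [hU, hc, hd, normalized_sigmoid_eq, logUtility]
  have hcrit : HasDerivAt (fun P => logUtility a (exp (a * b)) P - p * P) 0 Pstar := by
    have hslope : logUtilitySlope a (exp (a * b)) Pstar = p := by
      rw [← hfoc, hS, hlogU, (hasDerivAt_logUtility ha hE hPstar).deriv]
    simpa only [hslope, sub_self] using hasDerivAt_logUtility_sub_mul ha hE p hPstar
  have hmax : ∀ Q : ℝ, 0 < Q → Q ≠ Pstar →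
      logUtility a (exp (a * b)) Q - p * Q < logUtility a (exp (a * b)) Pstar - p * Pstar :=
    fun Q hQ hne => (strictConcaveOn_logUtility_sub_mul ha hE p).lt_of_hasDerivAt_eq_zero
      hPstar hQ hne hcrit
  simp only [congrFun hlogU] at hmax ⊢
  refine ⟨fun Q hQ => ?_, fun Q hQ heq => ?_⟩
  · rcases eq_or_ne Q Pstar with rfl | hne
    · rfl
    · exact (hmax Q hQ hne).le
  · by_contra hne
    exact (hmax Q hQ hne).ne heq

/-- If `p > 0` and `P* > 0` satisfies the first-order condition `S(P*) = p`, where `S` is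
the derivative of `log U`, then `P*` is the unique maximizer over `(0,∞)` of the user
objective `P ↦ log U(P) − p·P`. -/
theorem user_subproblem_unique_maximizer
    (a b c d : ℝ) (ha : 0 < a) (hb : 0 < b)
    (hc : c = (1 + Real.exp (a * b)) / Real.exp (a * b))
    (hd : d = 1 / (1 + Real.exp (a * b)))
    (U : ℝ → ℝ)
    (hU : ∀ P : ℝ, U P = c * (1 / (1 + Real.exp (-a * (P - b))) - d))
    (S : ℝ → ℝ) (hS : ∀ P : ℝ, S P = deriv (fun P => Real.log (U P)) P)
    (p : ℝ) (hp : 0 < p)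
    (Pstar : ℝ) (hPstar : 0 < Pstar) (hfoc : S Pstar = p) :
    (∀ Q : ℝ, 0 < Q →
        Real.log (U Q) - p * Q ≤ Real.log (U Pstar) - p * Pstar) ∧
    (∀ Q : ℝ, 0 < Q →
        Real.log (U Q) - p * Q = Real.log (U Pstar) - p * Pstar → Q = Pstar) :=
  user_subproblem_unique_maximizer_general a b c d ha hc hd U hU S hS p Pstar hPstar hfoc
end

section
/- Let a > 0, b > 0 be real numbers, set c = (1 + e^{a b})/e^{a b} and d = 1/(1 + e^{a b}), define U(P) = c·(1/(1 + e^{-a(P-b)}) − d), and let S(P) denote the derivative of log U at P for P > 0. Then for every p > 0 there exists a unique P > 0 such that S(P) = p; that is, S is a strictly decreasing bijection from (0, ∞) onto (0, ∞). -/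
open Real Set

/-! Writing `y = exp (a P)` and `E = exp (a b)`, the normalized utility collapses to
`U = (y - 1) / (y + E)`, so `(log U)' = a / (y - 1) + a E / (y + E)`. Both summands are
positive and decrease in `P`; the first blows up as `P → 0⁺` and both vanish as `P → ∞`.
Continuity and the intermediate value theorem then give surjectivity onto `(0, ∞)`, and
strict monotonicity gives uniqueness. -/

namespace SigmoidUtility

lemma utility_eq (a b P : ℝ) :
    (1 + exp (a * b)) / exp (a * b) * (1 / (1 + exp (-a * (P - b))) - 1 / (1 + exp (a * b))) =
      (exp (a * P) - 1) / (exp (a * P) + exp (a * b)) := by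
  have hshift : exp (-a * (P - b)) = exp (a * b) / exp (a * P) := by
    rw [← exp_sub]; ring_nf
  have hE := exp_pos (a * b)
  have hy := exp_pos (a * P)
  rw [hshift]
  field_simp
  ring

noncomputable def logSlope (a E P : ℝ) : ℝ :=
  a / (exp (a * P) - 1) + a * E / (exp (a * P) + E)

variable {a E P : ℝ}

lemma one_lt_exp_mul (ha : 0 < a) (hP : 0 < P) : 1 < exp (a * P) :=
  one_lt_exp_iff.mpr (mul_pos ha hP)

lemma logSlope_pos (ha : 0 < a) (hE : 0 ≤ E) (hP : 0 < P) : 0 < logSlope a E P := by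
  have hy := one_lt_exp_mul ha hP
  have : 0 < exp (a * P) - 1 := by linarith
  unfold logSlope
  positivity

lemma strictAntiOn_logSlope (ha : 0 < a) (hE : 0 ≤ E) : StrictAntiOn (logSlope a E) (Ioi 0) := by
  intro P hP Q _ hPQ
  have hy : 1 < exp (a * P) := one_lt_exp_mul ha hP
  have hyz : exp (a * P) < exp (a * Q) := exp_lt_exp.mpr (by nlinarith)
  have hfirst : a / (exp (a * Q) - 1) < a / (exp (a * P) - 1) :=
    div_lt_div_of_pos_left ha (by linarith) (by linarith)
  have hsecond : a * E / (exp (a * Q) + E) ≤ a * E / (exp (a * P) + E) :=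
    div_le_div_of_nonneg_left (by positivity) (by linarith) (by linarith)
  unfold logSlope
  linarith

lemma continuousOn_logSlope (ha : 0 < a) (hE : 0 ≤ E) : ContinuousOn (logSlope a E) (Ioi 0) := by
  have hy : ∀ P ∈ Ioi (0 : ℝ), 1 < exp (a * P) := fun P hP => one_lt_exp_mul ha hP
  unfold logSlope
  refine ContinuousOn.add ?_ ?_ <;> refine ContinuousOn.div (by fun_prop) (by fun_prop) ?_ <;>
    intro P hP <;> linarith [hy P hP]

lemma hasDerivAt_log_utility (ha : 0 < a) (hE : 0 ≤ E) (hP : 0 < P) :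
    HasDerivAt (fun P => log ((exp (a * P) - 1) / (exp (a * P) + E))) (logSlope a E P) P := by
  have hy := one_lt_exp_mul ha hP
  have hexp : HasDerivAt (fun P => exp (a * P)) (exp (a * P) * a) P := by
    simpa using ((hasDerivAt_id P).const_mul a).exp
  have hnum : exp (a * P) - 1 ≠ 0 := by linarith
  have hden : exp (a * P) + E ≠ 0 := by linarith
  refine ((hexp.sub_const 1).fun_div (hexp.add_const E) hden).log (div_ne_zero hnum hden)
    |>.congr_deriv ?_
  unfold logSlope
  field_simp
  ring

lemma exp_mul_log_div (ha : 0 < a) {y : ℝ} (hy : 0 < y) : exp (a * (log y / a)) = y := by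
  rw [mul_div_cancel₀ _ ha.ne', exp_log hy]

lemma exists_logSlope_eq (ha : 0 < a) (hE : 0 ≤ E) {p : ℝ} (hp : 0 < p) :
    ∃ P, 0 < P ∧ logSlope a E P = p := by
  -- `exp (a * Plo) = 1 + a / p` makes the first summand equal `p`; at
  -- `y = exp (a * Phi)` the bound `a E / (y + E) ≤ a E / (y - 1)` caps the slope by
  -- `a (1 + E) / (y - 1) = p`.
  set Plo := log (1 + a / p) / a
  set Phi := log (1 + a * (1 + E) / p) / a
  have hPlo : 0 < Plo := div_pos (log_pos (lt_add_of_pos_right 1 (by positivity))) ha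
  have hPhi : 0 < Phi := div_pos (log_pos (lt_add_of_pos_right 1 (by positivity))) ha
  have hlo : p ≤ logSlope a E Plo := by
    have : a / (1 + a / p - 1) = p := by rw [add_sub_cancel_left]; field_simp
    unfold logSlope
    rw [exp_mul_log_div ha (by positivity), this]
    linarith [show 0 ≤ a * E / (1 + a / p + E) by positivity]
  have hhi : logSlope a E Phi ≤ p := by
    set y := 1 + a * (1 + E) / p
    have hy1 : 0 < y - 1 := by simp only [y, add_sub_cancel_left]; positivity
    have hsecond : a * E / (y + E) ≤ a * E / (y - 1) :=
      div_le_div_of_nonneg_left (by positivity) hy1 (by linarith)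
    have hbound : a / (y - 1) + a * E / (y - 1) = p := by simp only [y]; field_simp; ring
    unfold logSlope
    rw [exp_mul_log_div ha (by positivity)]
    linarith
  have hsub : uIcc Plo Phi ⊆ Ioi 0 := fun x hx => lt_of_lt_of_le (lt_min hPlo hPhi) hx.1
  obtain ⟨P, hP, hPeq⟩ := intermediate_value_uIcc ((continuousOn_logSlope ha hE).mono hsub)
    (mem_uIcc.mpr (.inr ⟨hhi, hlo⟩))
  exact ⟨P, hsub hP, hPeq⟩

end SigmoidUtility

open SigmoidUtility in
theorem slope_strictAnti_bijective_general
    (a b c d : ℝ) (ha : 0 < a)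
    (hc : c = (1 + Real.exp (a * b)) / Real.exp (a * b))
    (hd : d = 1 / (1 + Real.exp (a * b)))
    (U : ℝ → ℝ)
    (hU : ∀ P : ℝ, U P = c * (1 / (1 + Real.exp (-a * (P - b))) - d))
    (S : ℝ → ℝ) (hS : ∀ P : ℝ, S P = deriv (fun P => Real.log (U P)) P) :
    StrictAntiOn S (Ioi (0 : ℝ)) ∧
    (∀ P : ℝ, 0 < P → 0 < S P) ∧
    (∀ p : ℝ, 0 < p → ∃! P : ℝ, 0 < P ∧ S P = p) := by
  have hE : 0 ≤ exp (a * b) := (exp_pos _).le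
  have hUeq : U = fun P => (exp (a * P) - 1) / (exp (a * P) + exp (a * b)) := by
    funext P; rw [hU, hc, hd, utility_eq]
  have hSeq : EqOn (logSlope a (exp (a * b))) S (Ioi 0) := fun P hP => by
    rw [hS, hUeq, (hasDerivAt_log_utility ha hE hP).deriv]
  have hanti := (strictAntiOn_logSlope ha hE).congr hSeq
  refine ⟨hanti, fun P hP => hSeq hP ▸ logSlope_pos ha hE hP, fun p hp => ?_⟩
  obtain ⟨P, hP, hPeq⟩ := exists_logSlope_eq ha hE hp
  refine ⟨P, ⟨hP, hSeq hP ▸ hPeq⟩, fun Q ⟨hQ, hQeq⟩ => ?_⟩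
  exact hanti.injOn hQ hP (by rw [hQeq, ← hSeq hP, hPeq])

/-- The slope `S = (log U)'` of the sigmoidal-like utility is a strictly decreasing
bijection from `(0, ∞)` onto `(0, ∞)`: it is strictly antitone on `(0, ∞)` and for
every `p > 0` there is a unique `P > 0` with `S(P) = p`. -/
theorem slope_strictAnti_bijective
    (a b c d : ℝ) (ha : 0 < a) (hb : 0 < b)
    (hc : c = (1 + Real.exp (a * b)) / Real.exp (a * b))
    (hd : d = 1 / (1 + Real.exp (a * b)))
    (U : ℝ → ℝ)
    (hU : ∀ P : ℝ, U P = c * (1 / (1 + Real.exp (-a * (P - b))) - d))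
    (S : ℝ → ℝ) (hS : ∀ P : ℝ, S P = deriv (fun P => Real.log (U P)) P) :
    StrictAntiOn S (Ioi (0 : ℝ)) ∧
    (∀ P : ℝ, 0 < P → 0 < S P) ∧
    (∀ p : ℝ, 0 < p → ∃! P : ℝ, 0 < P ∧ S P = p) :=
  slope_strictAnti_bijective_general a b c d ha hc hd U hU S hS
end
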